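/- arXiv:1705.09183 — 2 statements merged into one kernel-verified Lean document; each statement's English description precedes it below -/
import Mathlib

section
/- Let g : ℂ → ℂ be entire and f : ℂ → ℂ entire, δ ∈ ℂ nonzero. If z = g(f(z) − δ g(z)) for all z ∈ ℂ, then g is surjective and has a right inverse, hence g is bijective entire, so g is affine; consequently f is affine as well. -/
/-!
Put `h z = f z - δ * g z`. The hypothesis says `g ∘ h = id`, so `h` is an injective entire
function. By the open mapping theorem `h` stays a positive distance away from `h 0` outside the unit
disc, so `z ↦ 1 / (h (1 / z) - h 0)` has a removable singularity at `0`; its order of vanishing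
there bounds `|h z|` by a power of `|z|`, so `h` is a polynomial by Cauchy's estimates, and an
injective complex polynomial has degree one. Hence `g = h⁻¹` and `f = h + δ g` are affine.
-/

open Polynomial Filter Topology Asymptotics Bornology Metric

theorem Polynomial.eval_derivative_eq_zero_of_injective {K : Type*} [Field K] [IsAlgClosed K]
    {p : K[X]} (hp : Function.Injective p.eval) (hdeg : 2 ≤ p.natDegree) (w : K) :
    p.derivative.eval w = 0 := by
  set q := p - C (p.eval w)
  have hq_deg : q.natDegree = p.natDegree := natDegree_sub_C
  have hq_roots : q.roots = Multiset.replicate q.natDegree w := by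
    refine Multiset.eq_replicate.2 ⟨(IsAlgClosed.splits q).natDegree_eq_card_roots.symm, ?_⟩
    intro r hr
    have hq0 : q ≠ 0 := fun h => by rw [h, natDegree_zero] at hq_deg; omega
    exact hp (sub_eq_zero.1 (by simpa [q] using (mem_roots hq0).1 hr))
  have hq_eq : q = C q.leadingCoeff * (X - C w) ^ q.natDegree := by
    simpa [hq_roots, Multiset.prod_replicate] using (IsAlgClosed.splits q).eq_prod_roots
  have hpq : p.derivative = q.derivative := by simp [q]
  rw [hpq, hq_eq, hq_deg]
  simp [derivative_pow, Nat.sub_ne_zero_of_lt (by omega : 1 < p.natDegree)]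

theorem Polynomial.natDegree_le_one_of_injective {K : Type*} [Field K] [IsAlgClosed K] [CharZero K]
    {p : K[X]} (hp : Function.Injective p.eval) : p.natDegree ≤ 1 := by
  by_contra! hdeg
  have hp' : p.derivative = 0 :=
    zero_of_eval_zero _ (eval_derivative_eq_zero_of_injective hp hdeg)
  have := derivative_eq_zero.1 hp'
  omega

theorem Differentiable.iteratedDeriv_eq_zero_of_isBigO_pow {f : ℂ → ℂ} (hf : Differentiable ℂ f)
    {n k : ℕ} (hO : f =O[cobounded ℂ] (· ^ n)) (hk : n < k) : iteratedDeriv k f 0 = 0 := by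
  obtain ⟨C, hC⟩ := hO.bound
  obtain ⟨R₀, -, hR₀⟩ := Filter.hasBasis_cobounded_norm.eventually_iff.1 hC
  have cauchy : ∀ R > max R₀ 0, ‖iteratedDeriv k f 0‖ ≤ k.factorial * C * (R ^ n / R ^ k) := by
    intro R hR
    have hRpos : 0 < R := (le_max_right _ _).trans_lt hR
    refine (Complex.norm_iteratedDeriv_le_of_forall_mem_sphere_norm_le (C := C * R ^ n) k hRpos
      hf.diffContOnCl fun z hz => ?_).trans_eq (by ring)
    rw [mem_sphere_zero_iff_norm] at hz
    simpa [hz] using hR₀ (show R₀ ≤ ‖z‖ by rw [hz]; exact (le_max_left _ _).trans hR.le)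
  have hlim : Tendsto (fun R : ℝ => k.factorial * C * (R ^ n / R ^ k)) atTop (𝓝 0) := by
    simpa using (tendsto_pow_div_pow_atTop_zero hk).const_mul ((k.factorial : ℝ) * C)
  exact norm_le_zero_iff.1 <| ge_of_tendsto hlim <|
    (eventually_gt_atTop (max R₀ 0)).mono cauchy

theorem Differentiable.exists_polynomial_of_isBigO_pow {f : ℂ → ℂ} (hf : Differentiable ℂ f)
    {n : ℕ} (hO : f =O[cobounded ℂ] (· ^ n)) :
    ∃ p : ℂ[X], p.natDegree ≤ n ∧ ∀ z, f z = p.eval z := by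
  refine ⟨∑ k ∈ Finset.range (n + 1), C ((k.factorial : ℂ)⁻¹ * iteratedDeriv k f 0) * X ^ k,
    natDegree_sum_le_of_forall_le _ _ fun k hk => (natDegree_C_mul_X_pow_le _ _).trans
      (Nat.lt_succ_iff.1 (Finset.mem_range.1 hk)), fun z => ?_⟩
  rw [← Complex.taylorSeries_eq_of_entire' 0 z hf, tsum_eq_sum (s := Finset.range (n + 1)),
    eval_finsetSum]
  · simp
  · intro k hk
    simp [hf.iteratedDeriv_eq_zero_of_isBigO_pow hO (by simpa using hk)]

theorem AnalyticAt.exists_isBigO_pow_sub {𝕜 E : Type*} [NontriviallyNormedField 𝕜]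
    [NormedAddCommGroup E] [NormedSpace 𝕜 E] {f : 𝕜 → E} {z₀ : 𝕜} (hf : AnalyticAt 𝕜 f z₀)
    (hf0 : ¬∀ᶠ z in 𝓝 z₀, f z = 0) : ∃ n : ℕ, (fun z => (z - z₀) ^ n) =O[𝓝 z₀] f := by
  obtain ⟨n, g, hg, hg0, hfg⟩ := hf.exists_eventuallyEq_pow_smul_nonzero_iff.2 hf0
  have hg_bdd_below : (fun _ => (1 : 𝕜)) =O[𝓝 z₀] g :=
    (isBigO_const_left_iff_pos_le_norm one_ne_zero).2 ⟨‖g z₀‖ / 2, by positivity,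
      (hg.continuousAt.norm.eventually (lt_mem_nhds (half_lt_self (norm_pos_iff.2 hg0)))).mono
        fun _ h => h.le⟩
  refine ⟨n, ?_⟩
  have := (isBigO_refl (fun z => (z - z₀) ^ n) (𝓝 z₀)).smul hg_bdd_below
  simp only [smul_eq_mul, mul_one] at this
  exact this.trans_eventuallyEq (hfg.mono fun _ h => h.symm)

theorem Differentiable.exists_isBigO_pow_of_eventually_le_norm {F : ℂ → ℂ}
    (hF : Differentiable ℂ F) {ε : ℝ} (hε : 0 < ε) (hFε : ∀ᶠ z in cobounded ℂ, ε ≤ ‖F z‖) :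
    ∃ n : ℕ, F =O[cobounded ℂ] (· ^ n) := by
  set φ : ℂ → ℂ := fun z => (F z⁻¹)⁻¹
  have hFε' : ∀ᶠ z in 𝓝[≠] 0, ε ≤ ‖F z⁻¹‖ := tendsto_inv₀_nhdsNE_zero.eventually hFε
  have hφ_diff : ∀ᶠ z in 𝓝[≠] 0, DifferentiableAt ℂ φ z := by
    filter_upwards [hFε', self_mem_nhdsWithin] with z hz hz0
    exact ((hF _).comp z (differentiableAt_inv hz0)).inv (norm_pos_iff.1 (hε.trans_le hz))
  have hφ_bdd : IsBoundedUnder (· ≤ ·) (𝓝[≠] 0) fun z => ‖φ z - φ 0‖ := by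
    refine isBoundedUnder_of_eventually_le (a := ε⁻¹ + ‖φ 0‖) ?_
    filter_upwards [hFε'] with z hz
    refine (norm_sub_le _ _).trans (by gcongr; simpa [φ] using inv_anti₀ hε hz)
  set Φ := Function.update φ 0 (limUnder (𝓝[≠] 0) φ)
  have hΦ : AnalyticAt ℂ Φ 0 := by
    have hs := eventually_nhdsWithin_iff.1 hφ_diff
    refine (Complex.differentiableOn_update_limUnder_of_isLittleO hs (fun z hz => ?_)
      hφ_bdd.isLittleO_sub_self_inv).analyticAt hs
    exact (hz.1 hz.2).differentiableWithinAt
  have hΦφ : Φ =ᶠ[𝓝[≠] 0] φ := Function.update_eventuallyEq_nhdsNE φ 0 0 _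
  have hφ0 : ∀ᶠ z in 𝓝[≠] 0, φ z ≠ 0 := by
    filter_upwards [hFε'] with z hz
    exact inv_ne_zero (norm_pos_iff.1 (hε.trans_le hz))
  obtain ⟨n, hn⟩ := hΦ.exists_isBigO_pow_sub fun h => by
    obtain ⟨z, hz, hz'⟩ := ((h.filter_mono nhdsWithin_le_nhds).and (hΦφ.and hφ0)).exists
    exact hz'.2 (hz'.1 ▸ hz)
  have hφn : (fun z => z ^ n) =O[𝓝[≠] 0] φ := by
    simpa using (hn.mono nhdsWithin_le_nhds).trans_eventuallyEq hΦφ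
  refine ⟨n, ?_⟩
  have := (hφn.comp_tendsto tendsto_inv₀_cobounded').inv_rev ?_
  · simpa [φ, Function.comp_def] using this
  · filter_upwards [eventually_ne_cobounded 0] with z hz h
    exact absurd h (pow_ne_zero _ (inv_ne_zero hz))

theorem Differentiable.exists_eventually_le_norm_sub_of_injective {h : ℂ → ℂ}
    (hd : Differentiable ℂ h) (hi : Function.Injective h) :
    ∃ ε > 0, ∀ᶠ z in cobounded ℂ, ε ≤ ‖h z - h 0‖ := by
  have hopen : IsOpen (h '' ball 0 1) := by
    rcases (Complex.analyticOnNhd_univ_iff_differentiable.2 hd).is_constant_or_isOpenMap with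
      ⟨w, hw⟩ | hopen
    · exact absurd (hi ((hw 0).trans (hw 1).symm)) zero_ne_one
    · exact hopen _ isOpen_ball
  obtain ⟨ε, hε, hball⟩ := Metric.isOpen_iff.1 hopen _ ⟨0, mem_ball_self one_pos, rfl⟩
  refine ⟨ε, hε, ?_⟩
  filter_upwards [eventually_cobounded_le_norm 1] with z hz
  by_contra! hzε
  obtain ⟨w, hw, hwz⟩ := hball (mem_ball_iff_norm.2 hzε)
  rw [hi hwz, mem_ball_zero_iff] at hw
  exact hz.not_gt hw

theorem Differentiable.exists_affine_of_injective {h : ℂ → ℂ} (hd : Differentiable ℂ h)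
    (hi : Function.Injective h) : ∃ a b : ℂ, a ≠ 0 ∧ ∀ z, h z = a * z + b := by
  obtain ⟨ε, hε, hbelow⟩ := hd.exists_eventually_le_norm_sub_of_injective hi
  have hd' : Differentiable ℂ fun z => h z - h 0 := hd.sub_const _
  obtain ⟨n, hO⟩ := hd'.exists_isBigO_pow_of_eventually_le_norm hε hbelow
  obtain ⟨p, -, hp⟩ := hd'.exists_polynomial_of_isBigO_pow hO
  have hpi : Function.Injective p.eval := fun x y hxy =>
    hi (sub_left_injective ((hp x).trans (hxy.trans (hp y).symm)))
  have hform := eq_X_add_C_of_natDegree_le_one (natDegree_le_one_of_injective hpi)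
  refine ⟨p.coeff 1, p.coeff 0 + h 0, fun ha => zero_ne_one (hpi ?_), fun z => ?_⟩
  · rw [hform, ha]
    simp
  · have := hp z
    rw [hform] at this
    simp only [eval_add, eval_mul, eval_C, eval_X] at this
    linear_combination this

theorem stmt5_general (f g : ℂ → ℂ) (hf : Differentiable ℂ f) (hg : Differentiable ℂ g)
    (δ : ℂ) (heq : ∀ z, z = g (f z - δ * g z)) :
    Function.Surjective g ∧ Function.Bijective g ∧
    (∃ a b : ℂ, ∀ z, g z = a * z + b) ∧ (∃ a b : ℂ, ∀ z, f z = a * z + b) := by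
  set h : ℂ → ℂ := fun z => f z - δ * g z
  have hgh : Function.LeftInverse g h := fun z => (heq z).symm
  have hd : Differentiable ℂ h := hf.sub (hg.const_mul δ)
  obtain ⟨a, b, ha, hab⟩ := hd.exists_affine_of_injective hgh.injective
  have hg_affine : ∀ w, g w = a⁻¹ * w + -(a⁻¹ * b) := fun w => calc
    g w = g (h (a⁻¹ * (w - b))) := by rw [hab, mul_inv_cancel_left₀ ha, sub_add_cancel]
    _ = a⁻¹ * w + -(a⁻¹ * b) := by rw [hgh]; ring
  have hg_inj : Function.Injective g := fun x y hxy => by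
    simpa [hg_affine, ha] using hxy
  refine ⟨hgh.surjective, ⟨hg_inj, hgh.surjective⟩, ⟨_, _, hg_affine⟩,
    ⟨a + δ * a⁻¹, b - δ * (a⁻¹ * b), fun z => ?_⟩⟩
  have hfz : f z = h z + δ * g z := by simp only [h]; ring
  rw [hfz, hab, hg_affine]
  ring

/-- Graph case `{w = g(z)}` of invariance: if `z = g (f z - δ g z)` for all `z`
(with `δ ≠ 0`), then `g` is surjective and bijective, hence affine, and `f` is
affine as well. -/
theorem stmt5 (f g : ℂ → ℂ) (hf : Differentiable ℂ f) (hg : Differentiable ℂ g)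
    (δ : ℂ) (hδ : δ ≠ 0) (heq : ∀ z, z = g (f z - δ * g z)) :
    Function.Surjective g ∧ Function.Bijective g ∧
    (∃ a b : ℂ, ∀ z, g z = a * z + b) ∧ (∃ a b : ℂ, ∀ z, f z = a * z + b) :=
  stmt5_general f g hf hg δ heq
end

section
/- Let F(z,w) = (e^{−z} + 2z − w, z) and let (z₀,w₀) ∈ R_α (defined as Re z₀ > Re w₀ + α + A_α e^{−Re w₀} with A_α = e^{−α}/(1−e^{−α})), α > 0. Write (z_n, w_n) = F^n(z₀,w₀). Then Re z_n > Re z₀ + nα for all n ≥ 1, and hence Re z_n → ∞ and Re w_n → ∞. -/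
/-!
Writing `A = e^{-α} / (1 - e^{-α})`, the constant is chosen so that `(A + 1) e^{-α} = A`. For
`(z, w)` in the region `Re z > Re w + α + A e^{-Re w}` and `(z', z) = F (z, w)`, the bound
`Re e^{-z} ≥ -e^{-Re z}` gives `Re z' > Re z + α + A e^{-Re z}`, because
`(A + 1) e^{-Re z} < (A + 1) e^{-α} e^{-Re w} = A e^{-Re w}`. So the region is forward invariant
and `Re z` grows by more than `α` at every step, while `w_{n+1} = z_n`.
-/

open Filter Set

section IterateGrowth

variable {X : Type*} {f : X → X} {s : Set X} {g : X → ℝ} {α : ℝ}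

theorem add_mul_lt_apply_iterate (hf : MapsTo f s s) (hg : ∀ x ∈ s, g x + α < g (f x))
    {x : X} (hx : x ∈ s) (n : ℕ) (hn : 1 ≤ n) : g x + n * α < g (f^[n] x) := by
  induction n, hn using Nat.le_induction with
  | base => simpa using hg x hx
  | succ n _ ih =>
    rw [Function.iterate_succ_apply']
    have hstep := hg _ (hf.iterate n hx)
    push_cast
    linarith

theorem tendsto_apply_iterate_atTop (hα : 0 < α) (hf : MapsTo f s s)
    (hg : ∀ x ∈ s, g x + α < g (f x)) {x : X} (hx : x ∈ s) :
    Tendsto (fun n : ℕ => g (f^[n] x)) atTop atTop := by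
  refine tendsto_atTop_mono' atTop ?_ (tendsto_atTop_add_const_left _ (g x)
    ((tendsto_natCast_atTop_atTop (R := ℝ)).atTop_mul_const hα))
  filter_upwards [eventually_ge_atTop 1] with n hn
  exact (add_mul_lt_apply_iterate hf hg hx n hn).le

end IterateGrowth

theorem neg_exp_re_le_re_exp (z : ℂ) : -Real.exp z.re ≤ (Complex.exp z).re := by
  rw [Complex.exp_re]
  nlinarith [Real.neg_one_le_cos z.im, Real.exp_pos z.re]

noncomputable def expHenonMap (p : ℂ × ℂ) : ℂ × ℂ := (Complex.exp (-p.1) + 2 * p.1 - p.2, p.1)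

noncomputable def absorbingConst (α : ℝ) : ℝ := Real.exp (-α) / (1 - Real.exp (-α))

def absorbingRegion (α : ℝ) : Set (ℂ × ℂ) :=
  {p | p.2.re + α + absorbingConst α * Real.exp (-p.2.re) < p.1.re}

theorem absorbingConst_pos {α : ℝ} (hα : 0 < α) : 0 < absorbingConst α :=
  div_pos (Real.exp_pos _) (sub_pos.2 (Real.exp_lt_one_iff.2 (neg_neg_of_pos hα)))

theorem absorbingConst_add_one_mul_exp {α : ℝ} (hα : α ≠ 0) :
    (absorbingConst α + 1) * Real.exp (-α) = absorbingConst α := by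
  have hne : 1 - Real.exp (-α) ≠ 0 :=
    sub_ne_zero.2 (fun h => hα (neg_eq_zero.1 (Real.exp_eq_one_iff _ |>.1 h.symm)))
  unfold absorbingConst
  field_simp
  ring

theorem re_fst_expHenonMap_gt {α : ℝ} (hα : 0 < α) {p : ℂ × ℂ} (hp : p ∈ absorbingRegion α) :
    p.1.re + α + absorbingConst α * Real.exp (-p.1.re) < (expHenonMap p).1.re := by
  set A := absorbingConst α
  have hp : p.2.re + α + A * Real.exp (-p.2.re) < p.1.re := hp
  have hexp : Real.exp (-p.1.re) < Real.exp (-α) * Real.exp (-p.2.re) := by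
    rw [← Real.exp_add, Real.exp_lt_exp]
    nlinarith [absorbingConst_pos hα, Real.exp_pos (-p.2.re)]
  have hdecay : (A + 1) * Real.exp (-p.1.re) < A * Real.exp (-p.2.re) :=
    calc (A + 1) * Real.exp (-p.1.re)
        < (A + 1) * (Real.exp (-α) * Real.exp (-p.2.re)) :=
          mul_lt_mul_of_pos_left hexp (by linarith [absorbingConst_pos hα])
      _ = A * Real.exp (-p.2.re) := by
          rw [← mul_assoc, absorbingConst_add_one_mul_exp hα.ne']
  have hre : (expHenonMap p).1.re = (Complex.exp (-p.1)).re + 2 * p.1.re - p.2.re := by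
    simp [expHenonMap]
  have hlow := neg_exp_re_le_re_exp (-p.1)
  rw [Complex.neg_re] at hlow
  linarith

theorem mapsTo_expHenonMap_absorbingRegion {α : ℝ} (hα : 0 < α) :
    MapsTo expHenonMap (absorbingRegion α) (absorbingRegion α) :=
  fun _ hp => re_fst_expHenonMap_gt hα hp

theorem re_fst_add_lt_re_fst_expHenonMap {α : ℝ} (hα : 0 < α) {p : ℂ × ℂ}
    (hp : p ∈ absorbingRegion α) : p.1.re + α < (expHenonMap p).1.re := by
  have := re_fst_expHenonMap_gt hα hp
  have := mul_pos (absorbingConst_pos hα) (Real.exp_pos (-p.1.re))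
  linarith

/-- Along an orbit of `F(z,w) = (e^{-z} + 2z - w, z)` starting in `R_α`, one has
`Re z_n > Re z₀ + nα` for all `n ≥ 1`, hence `Re z_n → ∞` and `Re w_n → ∞`. -/
theorem stmt11 (α : ℝ) (hα : 0 < α) (z₀ w₀ : ℂ)
    (h : z₀.re > w₀.re + α + (Real.exp (-α) / (1 - Real.exp (-α))) * Real.exp (-w₀.re))
    (F : ℂ × ℂ → ℂ × ℂ)
    (hF : ∀ p, F p = (Complex.exp (-p.1) + 2 * p.1 - p.2, p.1)) :
    (∀ n : ℕ, 1 ≤ n → z₀.re + n * α < ((F^[n]) (z₀, w₀)).1.re) ∧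
    Filter.Tendsto (fun n : ℕ => ((F^[n]) (z₀, w₀)).1.re) Filter.atTop Filter.atTop ∧
    Filter.Tendsto (fun n : ℕ => ((F^[n]) (z₀, w₀)).2.re) Filter.atTop Filter.atTop := by
  obtain rfl : F = expHenonMap := funext hF
  have hp : (z₀, w₀) ∈ absorbingRegion α := h
  have hmaps := mapsTo_expHenonMap_absorbingRegion hα
  have hstep : ∀ p ∈ absorbingRegion α, p.1.re + α < (expHenonMap p).1.re :=
    fun _ => re_fst_add_lt_re_fst_expHenonMap hα
  have hz := tendsto_apply_iterate_atTop hα hmaps hstep hp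
  refine ⟨add_mul_lt_apply_iterate hmaps hstep hp, hz, ?_⟩
  rw [← tendsto_add_atTop_iff_nat 1]
  simpa only [Function.iterate_succ_apply', expHenonMap] using hz
end
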